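/- For every a ∈ 𝐚, dim Ŵ_a = k̄¹_a − m_a and Ŵ_a ⊆ W̄_a. -/

import Mathlib

open MeasureTheory Set Filter

noncomputable section

namespace KnotWavelet

/-- The space `L²(J)` for `J ⊆ ℝ`. -/
abbrev L2S (J : Set ℝ) := Lp ℝ 2 (volume.restrict J)

/-- `f ∈ L²(J)` is supported (a.e.) in `I`. -/
def SuppIn (J : Set ℝ) (f : L2S J) (I : Set ℝ) : Prop :=
  ∀ᵐ x ∂(volume.restrict J), x ∉ I → f x = 0

/-- `G_I`, the members of `G` supported in `I`. -/
def suppSet (J : Set ℝ) (G : Set (L2S J)) (I : Set ℝ) : Set (L2S J) :=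
  {g ∈ G | SuppIn J g I}

/-- For a subspace `V`, the subspace of members supported in `I`. -/
def suppSub (J : Set ℝ) (V : Submodule ℝ (L2S J)) (I : Set ℝ) : Submodule ℝ (L2S J) where
  carrier := {f | f ∈ V ∧ SuppIn J f I}
  zero_mem' := ⟨V.zero_mem, by
    filter_upwards [Lp.coeFn_zero ℝ 2 (volume.restrict J)] with x hx _
    simpa using hx⟩
  add_mem' := by
    rintro f g ⟨hfV, hf⟩ ⟨hgV, hg⟩
    refine ⟨V.add_mem hfV hgV, ?_⟩
    filter_upwards [Lp.coeFn_add f g, hf, hg] with x hx h1 h2 hxI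
    rw [hx]
    simp [Pi.add_apply, h1 hxI, h2 hxI]
  smul_mem' := by
    rintro c f ⟨hfV, hf⟩
    refine ⟨V.smul_mem c hfV, ?_⟩
    filter_upwards [Lp.coeFn_smul c f, hf] with x hx h1 hxI
    rw [hx]
    simp [h1 hxI]

/-- The successor `a₊` of `a` in `ks`, as an extended real (`+∞` if there is none). -/
def succE (ks : Set ℝ) (a : ℝ) : EReal := sInf ((fun x : ℝ => (x : EReal)) '' {b ∈ ks | a < b})

/-- The predecessor `a₋` of `a` in `ks`, as an extended real (`−∞` if there is none). -/
def predE (ks : Set ℝ) (a : ℝ) : EReal := sSup ((fun x : ℝ => (x : EReal)) '' {b ∈ ks | b < a})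

/-- The successor `a₊` of `a` in `ks` as a real number (junk value if there is none). -/
def succR (ks : Set ℝ) (a : ℝ) : ℝ := sInf {b ∈ ks | a < b}

/-- The interval `[a, a₊]`. -/
def IccS (ks : Set ℝ) (a : ℝ) : Set ℝ := {x | a ≤ x ∧ (x : EReal) ≤ succE ks a}

/-- The interval `[a₋, a₊]`. -/
def IccPS (ks : Set ℝ) (a : ℝ) : Set ℝ :=
  {x | predE ks a ≤ (x : EReal) ∧ (x : EReal) ≤ succE ks a}

/-- The interval `[a₋, a]`. -/
def IccP (ks : Set ℝ) (a : ℝ) : Set ℝ := {x | predE ks a ≤ (x : EReal) ∧ x ≤ a}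

/-- The interval `(a, a₊)`. -/
def IooS (ks : Set ℝ) (a : ℝ) : Set ℝ := {x | a < x ∧ (x : EReal) < succE ks a}

/-- The interval `[a₊, ∞)` (empty if `a₊ = +∞`). -/
def IciS (ks : Set ℝ) (a : ℝ) : Set ℝ := {x | succE ks a ≤ (x : EReal)}

/-- `ks` is a knot sequence in the interval `J`: it is a subset of `J` with at least three
elements, has no cluster (accumulation) point in `J`, and `inf ks = inf J`, `sup ks = sup J`
(as extended reals). -/
structure IsKnotSeq (J ks : Set ℝ) : Prop where
  subset : ks ⊆ J
  nontrivial : ∃ x y z : ℝ, x ∈ ks ∧ y ∈ ks ∧ z ∈ ks ∧ x ≠ y ∧ x ≠ z ∧ y ≠ z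
  noCluster : ∀ x ∈ J, ¬ AccPt x (Filter.principal ks)
  inf_eq : sInf ((fun x : ℝ => (x : EReal)) '' ks) = sInf ((fun x : ℝ => (x : EReal)) '' J)
  sup_eq : sSup ((fun x : ℝ => (x : EReal)) '' ks) = sSup ((fun x : ℝ => (x : EReal)) '' J)

/-- `a'` is the successor of `a` in `ks`. -/
def IsSucc (ks : Set ℝ) (a a' : ℝ) : Prop :=
  a ∈ ks ∧ a' ∈ ks ∧ a < a' ∧ ∀ b ∈ ks, b ≤ a ∨ a' ≤ b

/-- A collection `Φ ⊆ L²(J)` is locally finite: on each compact interval `K ⊆ J` all but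
finitely many members of `Φ` vanish (a.e.) on `K`. -/
def LocFin (J : Set ℝ) (Φ : Set (L2S J)) : Prop :=
  ∀ K : Set ℝ, IsCompact K → K ⊆ J →
    {φ ∈ Φ | ¬ ∀ᵐ x ∂(volume.restrict J), x ∈ K → φ x = 0}.Finite

/-- `Φ̆_a := Φ_{[a,a₊]}`. -/
def breveAt (J : Set ℝ) (ks : Set ℝ) (Φ : Set (L2S J)) (a : ℝ) : Set (L2S J) :=
  suppSet J Φ (IccS ks a)

open Classical in
/-- `Φ̆_{a₋}` (the empty set if `a` has no predecessor). -/
def brevePred (J : Set ℝ) (ks : Set ℝ) (Φ : Set (L2S J)) (a : ℝ) : Set (L2S J) :=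
  if {b ∈ ks | b < a}.Nonempty then suppSet J Φ (IccP ks a) else ∅

/-- `Φ_a := Φ_{[a₋,a₊]} \ Φ̆_{a₋}`. -/
def midAt (J : Set ℝ) (ks : Set ℝ) (Φ : Set (L2S J)) (a : ℝ) : Set (L2S J) :=
  suppSet J Φ (IccPS ks a) \ brevePred J ks Φ a

/-- `Φ̄_a := Φ_a \ Φ̆_a`. -/
def barAt (J : Set ℝ) (ks : Set ℝ) (Φ : Set (L2S J)) (a : ℝ) : Set (L2S J) :=
  midAt J ks Φ a \ breveAt J ks Φ a

open Classical in
/-- `Φ̄_{a₊}` (the empty set if `a` has no successor). -/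
def barSucc (J : Set ℝ) (ks : Set ℝ) (Φ : Set (L2S J)) (a : ℝ) : Set (L2S J) :=
  if {b ∈ ks | a < b}.Nonempty then barAt J ks Φ (succR ks a) else ∅

open Classical in
/-- Multiplication by the characteristic function of `I` (restriction to `I`). -/
def indL2 (J : Set ℝ) (I : Set ℝ) (f : L2S J) : L2S J :=
  if h : MeasurableSet I then ((Lp.memLp f).indicator h).toLp (I.indicator f) else 0

/-- `Φ` is a basis centered on the knot sequence `ks`. -/
def CenteredBasis (J ks : Set ℝ) (Φ : Set (L2S J)) : Prop :=
  LocFin J Φ ∧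
  Φ = ⋃ a ∈ ks, midAt J ks Φ a ∧
  ∀ a ∈ ks, LinearIndependent ℝ
    (fun φ : ↥(midAt J ks Φ a ∪ barSucc J ks Φ a) => indL2 J (IccS ks a) (φ : L2S J))

/-- `S(Φ)`: the `L²`-closure of the span of `Φ`. -/
def SClos (J : Set ℝ) (Φ : Set (L2S J)) : Submodule ℝ (L2S J) :=
  (Submodule.span ℝ Φ).topologicalClosure

/-- An orthogonal basis centered on `ks`. -/
def OrthoCenteredBasis (J ks : Set ℝ) (Φ : Set (L2S J)) : Prop :=
  CenteredBasis J ks Φ ∧ Φ.Pairwise fun f g => (inner ℝ f g : ℝ) = 0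

/-- The orthogonal projection onto the closure of a subspace, as a linear map. -/
def projL {H : Type*} [NormedAddCommGroup H] [InnerProductSpace ℝ H] [CompleteSpace H]
    (K : Submodule ℝ H) : H →ₗ[ℝ] H :=
  K.topologicalClosure.subtype ∘ₗ
    (Submodule.orthogonalProjectionOnto K.topologicalClosure : H →L[ℝ] K.topologicalClosure).toLinearMap

/-- The image `P_K U` of a subspace `U` under the orthogonal projection onto (the closure of)
`K`. -/
def projSub {H : Type*} [NormedAddCommGroup H] [InnerProductSpace ℝ H] [CompleteSpace H]
    (K U : Submodule ℝ H) : Submodule ℝ H :=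
  U.map (projL K)

/-- The image `(I − P_K) U`. -/
def oneSubProjSub {H : Type*} [NormedAddCommGroup H] [InnerProductSpace ℝ H] [CompleteSpace H]
    (K U : Submodule ℝ H) : Submodule ℝ H :=
  U.map (LinearMap.id - projL K)

/-- Two subspaces are orthogonal. -/
def PerpSub {H : Type*} [NormedAddCommGroup H] [InnerProductSpace ℝ H]
    (U V : Submodule ℝ H) : Prop :=
  ∀ f ∈ U, ∀ g ∈ V, (inner ℝ f g : ℝ) = 0

end KnotWavelet

namespace KnotWavelet

variable (J ks : Set ℝ)

open Classical in
/-- Multiplication by the characteristic function of `I`, as a linear map. -/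
def indLM (I : Set ℝ) : L2S J →ₗ[ℝ] L2S J where
  toFun := indL2 J I
  map_add' f g := by
    unfold indL2
    split_ifs with h
    · have hf := (Lp.memLp f).indicator h
      have hg := (Lp.memLp g).indicator h
      calc ((Lp.memLp (f + g)).indicator h).toLp (I.indicator ⇑(f + g))
          = (hf.add hg).toLp (I.indicator ⇑f + I.indicator ⇑g) := by
            refine MemLp.toLp_congr _ _ ?_
            filter_upwards [Lp.coeFn_add f g] with x hx
            by_cases hxI : x ∈ I
            · rw [Pi.add_apply, Set.indicator_of_mem hxI, Set.indicator_of_mem hxI,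
                Set.indicator_of_mem hxI]
              exact hx
            · rw [Pi.add_apply, Set.indicator_of_notMem hxI, Set.indicator_of_notMem hxI,
                Set.indicator_of_notMem hxI, add_zero]
        _ = hf.toLp (I.indicator ⇑f) + hg.toLp (I.indicator ⇑g) := MemLp.toLp_add hf hg
    · simp
  map_smul' c f := by
    unfold indL2
    split_ifs with h
    · have hf := (Lp.memLp f).indicator h
      calc ((Lp.memLp (c • f)).indicator h).toLp (I.indicator ⇑(c • f))
          = (hf.const_smul c).toLp (c • I.indicator ⇑f) := by
            refine MemLp.toLp_congr _ _ ?_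
            filter_upwards [Lp.coeFn_smul c f] with x hx
            by_cases hxI : x ∈ I
            · rw [Pi.smul_apply, Set.indicator_of_mem hxI, Set.indicator_of_mem hxI]
              exact hx
            · rw [Pi.smul_apply, Set.indicator_of_notMem hxI, Set.indicator_of_notMem hxI,
                smul_zero]
        _ = c • hf.toLp (I.indicator ⇑f) := MemLp.toLp_const_smul c hf
    · simp

/-- The image `χ_I · U` of a subspace under multiplication by the characteristic function of
`I`. -/
def chiMul (I : Set ℝ) (U : Submodule ℝ (L2S J)) : Submodule ℝ (L2S J) :=
  U.map (indLM J I)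

/-- `V_a`, the subspace of members of `V` supported in `[a₋, a₊]`. -/
def Vmid (V : Submodule ℝ (L2S J)) (a : ℝ) : Submodule ℝ (L2S J) :=
  suppSub J V (IccPS ks a)

/-- `V̆_a`, the subspace of members of `V` supported in `[a, a₊]`. -/
def Vbreve (V : Submodule ℝ (L2S J)) (a : ℝ) : Submodule ℝ (L2S J) :=
  suppSub J V (IccS ks a)

open Classical in
/-- `V̆_{a₋}` (the zero subspace if `a` has no predecessor in `ks`). -/
def VbrevePred (V : Submodule ℝ (L2S J)) (a : ℝ) : Submodule ℝ (L2S J) :=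
  if {b ∈ ks | b < a}.Nonempty then suppSub J V (IccP ks a) else ⊥

/-- `V̄_a := (I − P_{V̆_{a₋} ⊕ V̆_a}) V_a`. -/
def Vbar (V : Submodule ℝ (L2S J)) (a : ℝ) : Submodule ℝ (L2S J) :=
  oneSubProjSub (VbrevePred J ks V a ⊔ Vbreve J ks V a) (Vmid J ks V a)

/-- `A_a⁺ := P_{V̆¹_a} V̄⁰_a`. -/
def Aplus (V₀ V₁ : Submodule ℝ (L2S J)) (a : ℝ) : Submodule ℝ (L2S J) :=
  projSub (Vbreve J ks V₁ a) (Vbar J ks V₀ a)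

/-- `A_a⁻ := P_{V̆¹_{a₋}} V̄⁰_a`. -/
def Aminus (V₀ V₁ : Submodule ℝ (L2S J)) (a : ℝ) : Submodule ℝ (L2S J) :=
  projSub (VbrevePred J ks V₁ a) (Vbar J ks V₀ a)

/-- The wavelet space `W := V¹ ⊖ V⁰`, the orthogonal complement of `V⁰` in `V¹`. -/
def Wsp (V₀ V₁ : Submodule ℝ (L2S J)) : Submodule ℝ (L2S J) :=
  V₁ ⊓ V₀ᗮ

/-- `W̄_a := W_a ⊖ (W̆_{a₋} ⊕ W̆_a)`. -/
def Wbar (V₀ V₁ : Submodule ℝ (L2S J)) (a : ℝ) : Submodule ℝ (L2S J) :=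
  Vmid J ks (Wsp J V₀ V₁) a ⊓
    (VbrevePred J ks (Wsp J V₀ V₁) a ⊔ Vbreve J ks (Wsp J V₀ V₁) a)ᗮ

/-- `Y_a := V̄⁰_a ∩ V̄¹_a`. -/
def Ysp (V₀ V₁ : Submodule ℝ (L2S J)) (a : ℝ) : Submodule ℝ (L2S J) :=
  Vbar J ks V₀ a ⊓ Vbar J ks V₁ a

/-- `Y_a⁺ := (χ_{[a,a₊]}·V̄⁰_a) ∩ (χ_{[a,a₊]}·V̄¹_a)`. -/
def Yplus (V₀ V₁ : Submodule ℝ (L2S J)) (a : ℝ) : Submodule ℝ (L2S J) :=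
  chiMul J (IccS ks a) (Vbar J ks V₀ a) ⊓ chiMul J (IccS ks a) (Vbar J ks V₁ a)

/-- `Y_a⁻ := (χ_{[a₋,a]}·V̄⁰_a) ∩ (χ_{[a₋,a]}·V̄¹_a)`. -/
def Yminus (V₀ V₁ : Submodule ℝ (L2S J)) (a : ℝ) : Submodule ℝ (L2S J) :=
  chiMul J (IccP ks a) (Vbar J ks V₀ a) ⊓ chiMul J (IccP ks a) (Vbar J ks V₁ a)

/-- `X_a⁺ := (χ_{[a,a₊]}·V̄⁰_a) ⊖ Y_a⁺`. -/
def Xplus (V₀ V₁ : Submodule ℝ (L2S J)) (a : ℝ) : Submodule ℝ (L2S J) :=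
  chiMul J (IccS ks a) (Vbar J ks V₀ a) ⊓ (Yplus J ks V₀ V₁ a)ᗮ

/-- `X_a⁻ := (χ_{[a₋,a]}·V̄⁰_a) ⊖ Y_a⁻`. -/
def Xminus (V₀ V₁ : Submodule ℝ (L2S J)) (a : ℝ) : Submodule ℝ (L2S J) :=
  chiMul J (IccP ks a) (Vbar J ks V₀ a) ⊓ (Yminus J ks V₀ V₁ a)ᗮ

/-- `T_a := (I − P_{V̄¹_a}) V̄⁰_a`. -/
def Tsp (V₀ V₁ : Submodule ℝ (L2S J)) (a : ℝ) : Submodule ℝ (L2S J) :=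
  oneSubProjSub (Vbar J ks V₁ a) (Vbar J ks V₀ a)

/-- `T_a⁻ := {f ∈ T_a : supp f ⊆ [a₋,a]}`. -/
def Tminus (V₀ V₁ : Submodule ℝ (L2S J)) (a : ℝ) : Submodule ℝ (L2S J) :=
  suppSub J (Tsp J ks V₀ V₁ a) (IccP ks a)

/-- `T_a⁺ := {f ∈ T_a : supp f ⊆ [a,a₊]}`. -/
def Tplus (V₀ V₁ : Submodule ℝ (L2S J)) (a : ℝ) : Submodule ℝ (L2S J) :=
  suppSub J (Tsp J ks V₀ V₁ a) (IccS ks a)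

/-- `U_a := T_a ⊖ (T_a⁻ ⊕ T_a⁺)`. -/
def Usp (V₀ V₁ : Submodule ℝ (L2S J)) (a : ℝ) : Submodule ℝ (L2S J) :=
  Tsp J ks V₀ V₁ a ⊓ (Tminus J ks V₀ V₁ a ⊔ Tplus J ks V₀ V₁ a)ᗮ

/-- `S_a := (χ_{[a,a₊]} − χ_{[a₋,a]})·U_a`. -/
def Ssp (V₀ V₁ : Submodule ℝ (L2S J)) (a : ℝ) : Submodule ℝ (L2S J) :=
  (Usp J ks V₀ V₁ a).map (indLM J (IccS ks a) - indLM J (IccP ks a))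

/-- `Ŵ_a := (I − P_{V̄⁰_a}) V̄¹_a`. -/
def What (V₀ V₁ : Submodule ℝ (L2S J)) (a : ℝ) : Submodule ℝ (L2S J) :=
  oneSubProjSub (Vbar J ks V₀ a) (Vbar J ks V₁ a)

/-- `W̃_a := W̄_a ⊖ Ŵ_a`. -/
def Wtilde (V₀ V₁ : Submodule ℝ (L2S J)) (a : ℝ) : Submodule ℝ (L2S J) :=
  Wbar J ks V₀ V₁ a ⊓ (What J ks V₀ V₁ a)ᗮ

end KnotWavelet

/-!
`Ŵ_a` is the image of `V̄¹_a` under `I − P_{V̄⁰_a}`, whose kernel on `V̄¹_a` is `Y_a` because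
`V̄⁰_a` is finite dimensional, hence closed; rank–nullity gives the dimension.

For the inclusion, `w = b − P b` with `b ∈ V̄¹_a` and `P = P_{V̄⁰_a}` lies in `V¹`, is supported
in `[a₋, a₊]` and is orthogonal to `V̆¹_{a₋} ⊕ V̆¹_a ⊇ W̆_{a₋} ⊕ W̆_a` (as `P b ∈ V⁰ ⊥ W`). The
substance is `w ⊥ V⁰`, tested on the basis `Φ⁰`. A basis function centered at `a` lies in
`(V̆⁰_{a₋} ⊕ V̆⁰_a) + V̄⁰_a`. One centered at another knot is orthogonal to both `b` and `P b`:
either the two windows overlap in a null set, or the knots are adjacent, and then `S(Φ)` splits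
orthogonally into the closed spans of the basis functions centered up to the left knot, supported
left of the right knot, and of the others, supported right of the left knot.
-/

namespace KnotWavelet

open Submodule

section InnerProductSpace

variable {𝕜 E : Type*} [RCLike 𝕜] [NormedAddCommGroup E] [InnerProductSpace 𝕜 E]

local notation "⟪" x ", " y "⟫" => inner 𝕜 x y

theorem mem_orthogonal_topologicalClosure_span {S : Set E} {v : E}
    (h : ∀ φ ∈ S, ⟪φ, v⟫ = 0) : v ∈ (span 𝕜 S).topologicalClosureᗮ := by
  rw [orthogonal_closure]
  exact isOrtho_span.2 (fun φ hφ w hw => (Set.mem_singleton_iff.1 hw) ▸ h φ hφ) |>.ge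
    (subset_span (Set.mem_singleton v))

theorem eq_zero_of_mem_topologicalClosure_span {S : Set E} {v : E}
    (hv : v ∈ (span 𝕜 S).topologicalClosure) (h : ∀ φ ∈ S, ⟪φ, v⟫ = 0) : v = 0 := by
  simpa using (inf_orthogonal_eq_bot _).le ⟨hv, mem_orthogonal_topologicalClosure_span h⟩

theorem isOrtho_topologicalClosure {U V : Submodule 𝕜 E} (h : U ⟂ V) :
    U.topologicalClosure ⟂ V.topologicalClosure := by
  rw [isOrtho_iff_le, orthogonal_closure]
  exact topologicalClosure_minimal _ h.le (isClosed_orthogonal V)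

theorem topologicalClosure_span_union_le_sup [CompleteSpace E] {S₁ S₂ : Set E}
    (h : span 𝕜 S₁ ⟂ span 𝕜 S₂) :
    (span 𝕜 (S₁ ∪ S₂)).topologicalClosure ≤
      (span 𝕜 S₁).topologicalClosure ⊔ (span 𝕜 S₂).topologicalClosure := by
  set C₁ := (span 𝕜 S₁).topologicalClosure
  set C₂ := (span 𝕜 S₂).topologicalClosure
  have hC : C₁ ⟂ C₂ := isOrtho_topologicalClosure (𝕜 := 𝕜) h
  intro u hu
  have hr : u - C₁.starProjection u - C₂.starProjection u = 0 := by
    refine eq_zero_of_mem_topologicalClosure_span (𝕜 := 𝕜) (S := S₁ ∪ S₂) ?_ ?_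
    · have hS : span 𝕜 S₁ ⊔ span 𝕜 S₂ ≤ span 𝕜 (S₁ ∪ S₂) := (span_union _ _).ge
      have h₁ := topologicalClosure_mono (le_sup_left.trans hS)
      have h₂ := topologicalClosure_mono (le_sup_right.trans hS)
      exact sub_mem (sub_mem hu (h₁ (starProjection_apply_mem _ _)))
        (h₂ (starProjection_apply_mem _ _))
    · rintro φ (hφ | hφ)
      · have hφ₁ : φ ∈ C₁ := le_topologicalClosure _ (subset_span hφ)
        rw [inner_sub_right,
          inner_right_of_mem_orthogonal hφ₁ (sub_starProjection_mem_orthogonal u),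
          hC.inner_eq hφ₁ (starProjection_apply_mem _ _), sub_zero]
      · have hφ₂ : φ ∈ C₂ := le_topologicalClosure _ (subset_span hφ)
        rw [sub_right_comm, inner_sub_right,
          inner_right_of_mem_orthogonal hφ₂ (sub_starProjection_mem_orthogonal u),
          hC.symm.inner_eq hφ₂ (starProjection_apply_mem _ _), sub_zero]
  rw [sub_sub, sub_eq_zero] at hr
  exact hr ▸ add_mem_sup (starProjection_apply_mem _ _) (starProjection_apply_mem _ _)

theorem inner_eq_zero_of_isOrtho_of_le_sup {V C₁ C₂ S₁ S₂ : Submodule 𝕜 E} (hC : C₁ ⟂ C₂)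
    (hV : V ≤ C₁ ⊔ C₂) (hC₁ : C₁ ≤ V ⊓ S₁) (hC₂ : C₂ ≤ V ⊓ S₂) {v y : E}
    (hv : v ∈ V ⊓ S₂) (hvperp : v ∈ (V ⊓ S₁ ⊓ S₂)ᗮ) (hy : y ∈ V ⊓ S₁) : ⟪y, v⟫ = 0 := by
  obtain ⟨v₁, hv₁, v₂, hv₂, rfl⟩ := mem_sup.1 (hV hv.1)
  have hv₁' : v₁ ∈ V ⊓ S₁ ⊓ S₂ := by
    refine ⟨hC₁ hv₁, ?_⟩
    simpa using sub_mem hv.2 (hC₂ hv₂).2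
  have hv₁0 : v₁ = 0 := by
    have := inner_right_of_mem_orthogonal hv₁' hvperp
    rwa [inner_add_right, hC.inner_eq hv₁ hv₂, add_zero, inner_self_eq_zero] at this
  subst hv₁0
  obtain ⟨y₁, hy₁, y₂, hy₂, rfl⟩ := mem_sup.1 (hV hy.1)
  have hy₂' : y₂ ∈ V ⊓ S₁ ⊓ S₂ := by
    refine ⟨⟨(hC₂ hy₂).1, ?_⟩, (hC₂ hy₂).2⟩
    simpa using sub_mem hy.2 (hC₁ hy₁).2
  rw [zero_add, inner_add_left, hC.inner_eq hy₁ hv₂, inner_right_of_mem_orthogonal hy₂'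
    (by simpa using hvperp), zero_add]

end InnerProductSpace

section Projection

variable {H : Type*} [NormedAddCommGroup H] [InnerProductSpace ℝ H] [CompleteSpace H]

theorem projL_apply (K : Submodule ℝ H) (v : H) :
    projL K v = K.topologicalClosure.starProjection v := rfl

theorem oneSubProjSub_le_inf_orthogonal {K U : Submodule ℝ H} (hKU : K ≤ U)
    (hU : IsClosed (U : Set H)) : oneSubProjSub K U ≤ U ⊓ Kᗮ := by
  rintro _ ⟨u, hu, rfl⟩
  refine ⟨sub_mem hu ?_, ?_⟩
  · exact topologicalClosure_minimal K hKU hU (starProjection_apply_mem _ _)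
  · rw [← orthogonal_closure]
    exact sub_starProjection_mem_orthogonal u

theorem le_topologicalClosure_sup_oneSubProjSub (K U : Submodule ℝ H) :
    U ≤ K.topologicalClosure ⊔ oneSubProjSub K U := fun u hu =>
  mem_sup.2 ⟨_, starProjection_apply_mem _ u, _, mem_map_of_mem hu, add_sub_cancel _ _⟩

theorem finrank_oneSubProjSub_add_finrank_inf {K U : Submodule ℝ H} [FiniteDimensional ℝ U]
    (hK : IsClosed (K : Set H)) :
    Module.finrank ℝ (oneSubProjSub K U) + Module.finrank ℝ (K ⊓ U : Submodule ℝ H) =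
      Module.finrank ℝ U := by
  set f := (LinearMap.id - projL K).domRestrict U
  have hker : LinearMap.ker f = (K ⊓ U).comap U.subtype := by
    ext u
    simp only [f, LinearMap.mem_ker, LinearMap.domRestrict_apply, LinearMap.sub_apply,
      LinearMap.id_apply, projL_apply, hK.submodule_topologicalClosure_eq, sub_eq_zero,
      eq_comm (a := (u : H)), starProjection_eq_self_iff]
    exact ⟨fun h => ⟨h, u.2⟩, And.left⟩
  have := f.finrank_range_add_finrank_ker
  rwa [LinearMap.range_domRestrict, hker,
    (comapSubtypeEquivOfLe inf_le_right).finrank_eq] at this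

end Projection

section Support

variable {J : Set ℝ}

theorem SuppIn.mono {f : L2S J} {X Y : Set ℝ} (h : SuppIn J f X) (hXY : X ⊆ Y) :
    SuppIn J f Y := by
  filter_upwards [h] with x hx hxY using hx fun hxX => hxY (hXY hxX)

theorem SuppIn.inter {f : L2S J} {X Y : Set ℝ} (hX : SuppIn J f X) (hY : SuppIn J f Y) :
    SuppIn J f (X ∩ Y) := by
  filter_upwards [hX, hY] with x h₁ h₂ hxXY
  by_cases hx : x ∈ X
  exacts [h₂ fun hy => hxXY ⟨hx, hy⟩, h₁ hx]

theorem inner_eq_zero_of_suppIn_of_null {f g : L2S J} {X Y : Set ℝ} (hf : SuppIn J f X)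
    (hg : SuppIn J g Y) (hnull : volume.restrict J (X ∩ Y) = 0) : inner ℝ f g = 0 := by
  rw [MeasureTheory.L2.inner_def]
  refine integral_eq_zero_of_ae ?_
  filter_upwards [hf, hg, measure_eq_zero_iff_ae_notMem.1 hnull] with x hfx hgx hx
  by_cases hxX : x ∈ X
  · simp [hgx fun hxY => hx ⟨hxX, hxY⟩]
  · simp [hfx hxX]

theorem mem_suppSub_top {f : L2S J} {X : Set ℝ} : f ∈ suppSub J ⊤ X ↔ SuppIn J f X :=
  and_iff_right trivial

theorem isClosed_suppSub_top {X : Set ℝ} (hX : MeasurableSet X) :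
    IsClosed (suppSub J ⊤ X : Set (L2S J)) := by
  have : (suppSub J ⊤ X : Set (L2S J)) = LpToLpRestrictCLM ℝ ℝ ℝ _ 2 Xᶜ ⁻¹' {0} := by
    ext f
    simp only [SetLike.mem_coe, mem_suppSub_top, Set.mem_preimage, Set.mem_singleton_iff,
      Lp.eq_zero_iff_ae_eq_zero]
    rw [(LpToLpRestrictCLM_coeFn ℝ Xᶜ f).congr_left, EventuallyEq, ae_restrict_iff' hX.compl]
    rfl
  rw [this]
  exact isClosed_singleton.preimage (ContinuousLinearMap.continuous _)

theorem isClosed_SClos (Φ : Set (L2S J)) : IsClosed (SClos J Φ : Set (L2S J)) :=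
  (span ℝ Φ).isClosed_topologicalClosure

theorem SClos_mono {Φ Ψ : Set (L2S J)} (h : Φ ⊆ Ψ) : SClos J Φ ≤ SClos J Ψ :=
  topologicalClosure_mono (span_mono h)

theorem isClosed_suppSub {V : Submodule ℝ (L2S J)} (hV : IsClosed (V : Set (L2S J)))
    {X : Set ℝ} (hX : MeasurableSet X) : IsClosed (suppSub J V X : Set (L2S J)) := by
  have : (suppSub J V X : Set (L2S J)) = (V : Set (L2S J)) ∩ suppSub J ⊤ X := by
    ext f
    exact and_congr_right fun _ => mem_suppSub_top.symm
  exact this ▸ hV.inter (isClosed_suppSub_top hX)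

end Support

section Knots

variable {ks : Set ℝ}

theorem predE_le_coe (a : ℝ) : predE ks a ≤ a :=
  sSup_le <| by rintro _ ⟨b, ⟨-, hba⟩, rfl⟩; exact EReal.coe_le_coe_iff.2 hba.le

theorem coe_le_succE (a : ℝ) : (a : EReal) ≤ succE ks a :=
  le_sInf <| by rintro _ ⟨b, ⟨-, hab⟩, rfl⟩; exact EReal.coe_le_coe_iff.2 hab.le

theorem coe_le_predE {p c : ℝ} (hp : p ∈ ks) (hpc : p < c) : (p : EReal) ≤ predE ks c :=
  le_sSup ⟨p, ⟨hp, hpc⟩, rfl⟩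

theorem succE_le_coe {c q : ℝ} (hq : q ∈ ks) (hcq : c < q) : succE ks c ≤ q :=
  sInf_le ⟨q, ⟨hq, hcq⟩, rfl⟩

theorem succE_mono : Monotone (succE ks) := fun _ _ h =>
  sInf_le_sInf <| Set.image_mono fun _ hb => ⟨hb.1, h.trans_lt hb.2⟩

theorem IccP_subset_IccPS (a : ℝ) : IccP ks a ⊆ IccPS ks a := fun _ hx =>
  ⟨hx.1, (EReal.coe_le_coe_iff.2 hx.2).trans (coe_le_succE a)⟩

theorem IccS_subset_IccPS (a : ℝ) : IccS ks a ⊆ IccPS ks a := fun _ hx =>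
  ⟨(predE_le_coe a).trans (EReal.coe_le_coe_iff.2 hx.1), hx.2⟩

theorem measurableSet_IccPS (a : ℝ) : MeasurableSet (IccPS ks a) :=
  (measurableSet_le measurable_const measurable_coe_real_ereal).inter
    (measurableSet_le measurable_coe_real_ereal measurable_const)

theorem IccP_eq_Icc {a c : ℝ} (h : predE ks a = c) : IccP ks a = Set.Icc c a := by
  ext x; simp [IccP, h]

theorem IccS_eq_Icc {a c : ℝ} (h : succE ks a = c) : IccS ks a = Set.Icc a c := by
  ext x; simp [IccS, h]

theorem IccPS_subset_Ici {a c : ℝ} (h : predE ks a = c) : IccPS ks a ⊆ Set.Ici c :=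
  fun _ hx => EReal.coe_le_coe_iff.1 (h ▸ hx.1)

theorem IccPS_subset_Iic {a c : ℝ} (h : succE ks a = c) : IccPS ks a ⊆ Set.Iic c :=
  fun _ hx => EReal.coe_le_coe_iff.1 (h ▸ hx.2)

theorem null_inter_or_adjacent (J : Set ℝ) {c a : ℝ} (hc : c ∈ ks) (ha : a ∈ ks) (hca : c < a) :
    volume.restrict J (IccPS ks c ∩ IccPS ks a) = 0 ∨ (predE ks a = c ∧ succE ks c = a) := by
  by_cases hsep : succE ks c ≤ predE ks a
  · left
    refine Set.Subsingleton.measure_zero (fun x hx y hy => ?_) _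
    have key : ∀ z ∈ IccPS ks c ∩ IccPS ks a, (z : EReal) = predE ks a := fun z hz =>
      le_antisymm (hz.1.2.trans hsep) hz.2.1
    exact EReal.coe_injective ((key x hx).trans (key y hy).symm)
  · right
    have hgap : ∀ b ∈ ks, c < b → a ≤ b := fun b hb hcb => not_lt.1 fun hba =>
      hsep ((succE_le_coe hb hcb).trans (coe_le_predE hb hba))
    refine ⟨le_antisymm (sSup_le ?_) (coe_le_predE hc hca),
      le_antisymm (succE_le_coe ha hca) (le_sInf ?_)⟩
    · rintro _ ⟨b, ⟨hb, hba⟩, rfl⟩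
      exact EReal.coe_le_coe_iff.2 (not_lt.1 fun hcb => (hgap b hb hcb).not_gt hba)
    · rintro _ ⟨b, ⟨hb, hcb⟩, rfl⟩
      exact EReal.coe_le_coe_iff.2 (hgap b hb hcb)

variable {J : Set ℝ}

theorem exists_mem_lowerBounds_IccPS_inter (hks : IsKnotSeq J ks) {a : ℝ} (ha : a ∈ ks) :
    ∃ l ∈ J, l ∈ lowerBounds (IccPS ks a ∩ J) := by
  by_cases hp : ∃ b ∈ ks, b < a
  · obtain ⟨b, hb, hba⟩ := hp
    exact ⟨b, hks.subset hb, fun x hx =>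
      EReal.coe_le_coe_iff.1 ((coe_le_predE hb hba).trans hx.1.1)⟩
  · refine ⟨a, hks.subset ha, fun x hx => ?_⟩
    have hinf : (a : EReal) ≤ sInf ((fun x : ℝ => (x : EReal)) '' J) := hks.inf_eq ▸ le_sInf (by
      rintro _ ⟨b, hb, rfl⟩
      exact EReal.coe_le_coe_iff.2 (not_lt.1 fun h => hp ⟨b, hb, h⟩))
    exact EReal.coe_le_coe_iff.1 (hinf.trans (sInf_le ⟨x, hx.2, rfl⟩))

theorem exists_mem_upperBounds_IccPS_inter (hks : IsKnotSeq J ks) {a : ℝ} (ha : a ∈ ks) :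
    ∃ r ∈ J, r ∈ upperBounds (IccPS ks a ∩ J) := by
  by_cases hs : ∃ b ∈ ks, a < b
  · obtain ⟨b, hb, hab⟩ := hs
    exact ⟨b, hks.subset hb, fun x hx =>
      EReal.coe_le_coe_iff.1 (hx.1.2.trans (succE_le_coe hb hab))⟩
  · refine ⟨a, hks.subset ha, fun x hx => ?_⟩
    have hsup : sSup ((fun x : ℝ => (x : EReal)) '' J) ≤ a := hks.sup_eq ▸ sSup_le (by
      rintro _ ⟨b, hb, rfl⟩
      exact EReal.coe_le_coe_iff.2 (not_lt.1 fun h => hs ⟨b, hb, h⟩))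
    exact EReal.coe_le_coe_iff.1 ((le_sSup (Set.mem_image_of_mem _ hx.2)).trans hsup)

theorem exists_isCompact_IccPS_inter_subset (hJ : J.OrdConnected) (hks : IsKnotSeq J ks) {a : ℝ}
    (ha : a ∈ ks) : ∃ K ⊆ J, IsCompact K ∧ IccPS ks a ∩ J ⊆ K := by
  obtain ⟨l, hl, hlx⟩ := exists_mem_lowerBounds_IccPS_inter hks ha
  obtain ⟨r, hr, hxr⟩ := exists_mem_upperBounds_IccPS_inter hks ha
  exact ⟨Set.Icc l r, hJ.out hl hr, isCompact_Icc, fun _ hx => ⟨hlx hx, hxr hx⟩⟩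

end Knots

section FiniteDimensional

variable {J ks : Set ℝ}

theorem SuppIn.of_inter_subset (hJ : MeasurableSet J) {f : L2S J} {X K : Set ℝ}
    (h : SuppIn J f X) (hXK : X ∩ J ⊆ K) : SuppIn J f K := by
  filter_upwards [h, ae_restrict_mem hJ] with x hx hxJ hxK using
    hx fun hxX => hxK (hXK ⟨hxX, hxJ⟩)

theorem mem_SClos_of_suppIn {Φ : Set (L2S J)}
    (horth : Φ.Pairwise fun f g => inner ℝ f g = 0) {K : Set ℝ} {f : L2S J}
    (hf : f ∈ SClos J Φ) (hsupp : SuppIn J f K) :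
    f ∈ SClos J {φ ∈ Φ | ¬ ∀ᵐ x ∂(volume.restrict J), x ∈ K → φ x = 0} := by
  set N := {φ ∈ Φ | ¬ ∀ᵐ x ∂(volume.restrict J), x ∈ K → φ x = 0}
  set C := (span ℝ N).topologicalClosure
  have hCΦ : C ≤ SClos J Φ := SClos_mono fun _ hφ => hφ.1
  suffices f - C.starProjection f = 0 from
    sub_eq_zero.1 this ▸ starProjection_apply_mem C f
  refine eq_zero_of_mem_topologicalClosure_span (sub_mem hf (hCΦ (starProjection_apply_mem _ _)))
    fun φ hφ => ?_
  by_cases hφN : φ ∈ N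
  · exact inner_right_of_mem_orthogonal (le_topologicalClosure _ (subset_span hφN))
      (sub_starProjection_mem_orthogonal f)
  have hφK : SuppIn J φ Kᶜ := by
    filter_upwards [not_not.1 fun h => hφN ⟨hφ, h⟩] with x hx hxK using hx (not_not.1 hxK)
  have hφC : φ ∈ Cᗮ := mem_orthogonal_topologicalClosure_span fun ψ hψ =>
    horth hψ.1 hφ fun h => hφN (h ▸ hψ)
  rw [inner_sub_right, inner_eq_zero_of_suppIn_of_null hφK hsupp (by simp),
    inner_left_of_mem_orthogonal (starProjection_apply_mem _ _) hφC, sub_zero]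

theorem finiteDimensional_Vmid (hJ : J.OrdConnected) (hks : IsKnotSeq J ks) {Φ : Set (L2S J)}
    (horth : Φ.Pairwise fun f g => inner ℝ f g = 0) (hloc : LocFin J Φ) {a : ℝ} (ha : a ∈ ks) :
    FiniteDimensional ℝ (Vmid J ks (SClos J Φ) a) := by
  obtain ⟨K, hKJ, hK, hXK⟩ := exists_isCompact_IccPS_inter_subset hJ hks ha
  set N := {φ ∈ Φ | ¬ ∀ᵐ x ∂(volume.restrict J), x ∈ K → φ x = 0}
  have : FiniteDimensional ℝ (span ℝ N) := FiniteDimensional.span_of_finite ℝ (hloc K hK hKJ)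
  refine finiteDimensional_of_le (S₂ := span ℝ N) fun f hf => ?_
  have := mem_SClos_of_suppIn horth hf.1 (hf.2.of_inter_subset hJ.measurableSet hXK)
  rwa [SClos, (span ℝ N).closed_of_finiteDimensional.submodule_topologicalClosure_eq] at this

end FiniteDimensional

section Split

variable {J ks : Set ℝ}

theorem SClos_le_suppSub_top {Φ : Set (L2S J)} {X : Set ℝ} (hX : MeasurableSet X)
    (h : ∀ φ ∈ Φ, SuppIn J φ X) : SClos J Φ ≤ suppSub J ⊤ X :=
  topologicalClosure_minimal _ (span_le.2 fun φ hφ => mem_suppSub_top.2 (h φ hφ))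
    (isClosed_suppSub_top hX)

theorem exists_isOrtho_split {Φ : Set (L2S J)} (horth : Φ.Pairwise fun f g => inner ℝ f g = 0)
    (hcov : Φ = ⋃ c ∈ ks, midAt J ks Φ c) {p q : ℝ} (hp : p ∈ ks) (hpq : succE ks p = q) :
    ∃ C₁ C₂ : Submodule ℝ (L2S J), C₁ ⟂ C₂ ∧ SClos J Φ ≤ C₁ ⊔ C₂ ∧
      C₁ ≤ SClos J Φ ⊓ suppSub J ⊤ (Set.Iic q) ∧ C₂ ≤ SClos J Φ ⊓ suppSub J ⊤ (Set.Ici p) := by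
  set Φle := {φ ∈ Φ | ∃ c ∈ ks, c ≤ p ∧ φ ∈ midAt J ks Φ c}
  have hle : ∀ φ ∈ Φle, SuppIn J φ (Set.Iic q) := by
    rintro φ ⟨-, c, -, hcp, hφ⟩
    exact hφ.1.2.mono fun x hx => EReal.coe_le_coe_iff.1 (hx.2.trans (hpq ▸ succE_mono hcp))
  have hge : ∀ φ ∈ Φ \ Φle, SuppIn J φ (Set.Ici p) := by
    rintro φ ⟨hφ, hφle⟩
    obtain ⟨c, hc, hφc⟩ := Set.mem_iUnion₂.1 (hcov ▸ hφ)
    have hpc : p < c := not_le.1 fun hcp => hφle ⟨hφ, c, hc, hcp, hφc⟩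
    exact hφc.1.2.mono fun x hx => EReal.coe_le_coe_iff.1 ((coe_le_predE hp hpc).trans hx.1)
  have hortho : span ℝ Φle ⟂ span ℝ (Φ \ Φle) :=
    isOrtho_span.2 fun φ hφ ψ hψ => horth hφ.1 hψ.1 fun h => hψ.2 (h ▸ hφ)
  have hΦ : SClos J Φ = SClos J (Φle ∪ Φ \ Φle) := by
    rw [Set.union_sdiff_cancel fun _ h => h.1]
  refine ⟨SClos J Φle, SClos J (Φ \ Φle), isOrtho_topologicalClosure hortho,
    hΦ ▸ topologicalClosure_span_union_le_sup hortho,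
    le_inf (SClos_mono fun _ h => h.1) (SClos_le_suppSub_top measurableSet_Iic hle),
    le_inf (SClos_mono Set.sdiff_subset) (SClos_le_suppSub_top measurableSet_Ici hge)⟩

end Split

section LocalSpaces

variable (J ks : Set ℝ)

/-- `V̆_{a₋} ⊕ V̆_a`. -/
def VbreveSum (V : Submodule ℝ (L2S J)) (a : ℝ) : Submodule ℝ (L2S J) :=
  VbrevePred J ks V a ⊔ Vbreve J ks V a

variable {J ks}

theorem suppSub_mono {V V' : Submodule ℝ (L2S J)} {X Y : Set ℝ} (hV : V ≤ V') (hXY : X ⊆ Y) :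
    suppSub J V X ≤ suppSub J V' Y := fun _ hf => ⟨hV hf.1, hf.2.mono hXY⟩

theorem VbreveSum_le_Vmid (V : Submodule ℝ (L2S J)) (a : ℝ) :
    VbreveSum J ks V a ≤ Vmid J ks V a := by
  refine sup_le ?_ (suppSub_mono le_rfl (IccS_subset_IccPS a))
  unfold VbrevePred
  split_ifs
  exacts [suppSub_mono le_rfl (IccP_subset_IccPS a), bot_le]

theorem VbreveSum_mono {V V' : Submodule ℝ (L2S J)} (h : V ≤ V') (a : ℝ) :
    VbreveSum J ks V a ≤ VbreveSum J ks V' a := by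
  refine sup_le_sup ?_ (suppSub_mono h subset_rfl)
  unfold VbrevePred
  split_ifs
  exacts [suppSub_mono h subset_rfl, le_rfl]

theorem topologicalClosure_Vbar_le {V : Submodule ℝ (L2S J)} (hV : IsClosed (V : Set (L2S J)))
    (a : ℝ) : (Vbar J ks V a).topologicalClosure ≤ Vmid J ks V a ⊓ (VbreveSum J ks V a)ᗮ := by
  have hmid : IsClosed (Vmid J ks V a : Set (L2S J)) := isClosed_suppSub hV (measurableSet_IccPS a)
  exact topologicalClosure_minimal _
    (oneSubProjSub_le_inf_orthogonal (VbreveSum_le_Vmid V a) hmid)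
    (hmid.inter (isClosed_orthogonal _))

theorem inner_eq_zero_of_mem_Vmid_of_ne {Φ : Set (L2S J)}
    (horth : Φ.Pairwise fun f g => inner ℝ f g = 0) (hcov : Φ = ⋃ c ∈ ks, midAt J ks Φ c)
    {a c : ℝ} (ha : a ∈ ks) (hc : c ∈ ks) (hca : c ≠ a) {u y : L2S J}
    (hu : u ∈ Vmid J ks (SClos J Φ) a ⊓ (VbreveSum J ks (SClos J Φ) a)ᗮ)
    (hy : y ∈ Vmid J ks (SClos J Φ) c) : inner ℝ y u = 0 := by
  rcases hca.lt_or_gt with hca | hac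
  · rcases null_inter_or_adjacent J hc ha hca with hnull | ⟨hpred, hsucc⟩
    · exact inner_eq_zero_of_suppIn_of_null hy.2 hu.1.2 hnull
    obtain ⟨C₁, C₂, hC, hV, hC₁, hC₂⟩ := exists_isOrtho_split horth hcov hc hsucc
    refine inner_eq_zero_of_isOrtho_of_le_sup hC hV hC₁ hC₂
      ⟨hu.1.1, mem_suppSub_top.2 (hu.1.2.mono (IccPS_subset_Ici hpred))⟩ (orthogonal_le ?_ hu.2)
      ⟨hy.1, mem_suppSub_top.2 (hy.2.mono (IccPS_subset_Iic hsucc))⟩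
    rintro w ⟨⟨hwV, hw₁⟩, hw₂⟩
    refine mem_sup_left ?_
    rw [VbrevePred, if_pos ⟨c, hc, hca⟩]
    refine ⟨hwV, ?_⟩
    rw [IccP_eq_Icc hpred, ← Set.Ici_inter_Iic]
    exact (mem_suppSub_top.1 hw₂).inter (mem_suppSub_top.1 hw₁)
  · rcases null_inter_or_adjacent J ha hc hac with hnull | ⟨hpred, hsucc⟩
    · exact inner_eq_zero_of_suppIn_of_null hy.2 hu.1.2 (Set.inter_comm _ _ ▸ hnull)
    obtain ⟨C₁, C₂, hC, hV, hC₁, hC₂⟩ := exists_isOrtho_split horth hcov ha hsucc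
    refine inner_eq_zero_of_isOrtho_of_le_sup hC.symm (sup_comm C₁ C₂ ▸ hV) hC₂ hC₁
      ⟨hu.1.1, mem_suppSub_top.2 (hu.1.2.mono (IccPS_subset_Iic hsucc))⟩ (orthogonal_le ?_ hu.2)
      ⟨hy.1, mem_suppSub_top.2 (hy.2.mono (IccPS_subset_Ici hpred))⟩
    rintro w ⟨⟨hwV, hw₁⟩, hw₂⟩
    refine mem_sup_right ⟨hwV, ?_⟩
    rw [IccS_eq_Icc hsucc, ← Set.Ici_inter_Iic]
    exact (mem_suppSub_top.1 hw₁).inter (mem_suppSub_top.1 hw₂)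

end LocalSpaces

section Wavelets

variable {J ks : Set ℝ}

theorem finiteDimensional_Vbar (hJ : J.OrdConnected) (hks : IsKnotSeq J ks) {Φ : Set (L2S J)}
    (horth : Φ.Pairwise fun f g => inner ℝ f g = 0) (hloc : LocFin J Φ) {a : ℝ} (ha : a ∈ ks) :
    FiniteDimensional ℝ (Vbar J ks (SClos J Φ) a) :=
  have := finiteDimensional_Vmid hJ hks horth hloc ha
  Module.Finite.map _ _

theorem What_le_Wbar {Φ₀ Φ₁ : Set (L2S J)} (horth₀ : Φ₀.Pairwise fun f g => inner ℝ f g = 0)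
    (hcov₀ : Φ₀ = ⋃ c ∈ ks, midAt J ks Φ₀ c) (horth₁ : Φ₁.Pairwise fun f g => inner ℝ f g = 0)
    (hcov₁ : Φ₁ = ⋃ c ∈ ks, midAt J ks Φ₁ c) {a : ℝ} (ha : a ∈ ks)
    (hle : SClos J Φ₀ ≤ SClos J Φ₁) :
    What J ks (SClos J Φ₀) (SClos J Φ₁) a ≤ Wbar J ks (SClos J Φ₀) (SClos J Φ₁) a := by
  set V₀ := SClos J Φ₀
  set V₁ := SClos J Φ₁
  rintro _ ⟨b, hb, rfl⟩
  set x := (Vbar J ks V₀ a).topologicalClosure.starProjection b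
  change b - x ∈ _
  have hb₁ : b ∈ Vmid J ks V₁ a ⊓ (VbreveSum J ks V₁ a)ᗮ :=
    topologicalClosure_Vbar_le (isClosed_SClos Φ₁) a (le_topologicalClosure _ hb)
  have hx₀ : x ∈ Vmid J ks V₀ a ⊓ (VbreveSum J ks V₀ a)ᗮ :=
    topologicalClosure_Vbar_le (isClosed_SClos Φ₀) a (starProjection_apply_mem _ b)
  have hw_Vbar : b - x ∈ (Vbar J ks V₀ a)ᗮ :=
    orthogonal_closure (Vbar J ks V₀ a) ▸ sub_starProjection_mem_orthogonal b
  have hw_K : b - x ∈ (VbreveSum J ks V₀ a)ᗮ :=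
    sub_mem (orthogonal_le (VbreveSum_mono hle a) hb₁.2) hx₀.2
  have hw_V₀ : b - x ∈ V₀ᗮ := by
    refine mem_orthogonal_topologicalClosure_span fun φ hφ => ?_
    obtain ⟨c, hc, hφc⟩ := Set.mem_iUnion₂.1 (hcov₀ ▸ hφ)
    have hφV : φ ∈ Vmid J ks V₀ c := ⟨le_topologicalClosure _ (subset_span hφ), hφc.1.2⟩
    by_cases hca : c = a
    · subst hca
      refine inner_right_of_mem_orthogonal
        (le_topologicalClosure_sup_oneSubProjSub (VbreveSum J ks V₀ c) _ hφV) ?_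
      rw [← inf_orthogonal, orthogonal_closure]
      exact ⟨hw_K, hw_Vbar⟩
    · rw [inner_sub_right,
        inner_eq_zero_of_mem_Vmid_of_ne horth₁ hcov₁ ha hc hca hb₁
          (suppSub_mono hle subset_rfl hφV),
        inner_eq_zero_of_mem_Vmid_of_ne horth₀ hcov₀ ha hc hca hx₀ hφV, sub_zero]
  have hKW₁ : VbreveSum J ks (Wsp J V₀ V₁) a ≤ VbreveSum J ks V₁ a := VbreveSum_mono inf_le_left a
  have hKW₀ : VbreveSum J ks (Wsp J V₀ V₁) a ≤ V₀ᗮ :=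
    (VbreveSum_le_Vmid _ a).trans fun _ hf => hf.1.2
  refine ⟨⟨⟨sub_mem hb₁.1.1 (hle hx₀.1.1), hw_V₀⟩, mem_suppSub_top.1
    (sub_mem (mem_suppSub_top.2 hb₁.1.2) (mem_suppSub_top.2 hx₀.1.2))⟩, ?_⟩
  exact sub_mem (orthogonal_le hKW₁ hb₁.2)
    (orthogonal_le hKW₀ (le_orthogonal_orthogonal V₀ hx₀.1.1))

end Wavelets

end KnotWavelet

open KnotWavelet in
theorem What_dim_and_subset_Wbar
    (J ks : Set ℝ) (hJ : J.OrdConnected) (hks : IsKnotSeq J ks)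
    (Φ₀ Φ₁ : Set (L2S J))
    (h₀ : OrthoCenteredBasis J ks Φ₀) (h₁ : OrthoCenteredBasis J ks Φ₁)
    (V₀ V₁ : Submodule ℝ (L2S J))
    (hV₀ : V₀ = SClos J Φ₀) (hV₁ : V₁ = SClos J Φ₁) (hle : V₀ ≤ V₁) :
    ∀ a ∈ ks,
      (Module.finrank ℝ ↥(What J ks V₀ V₁ a) : ℤ) =
          (Module.finrank ℝ ↥(Vbar J ks V₁ a) : ℤ) -
            (Module.finrank ℝ ↥(Ysp J ks V₀ V₁ a) : ℤ) ∧
      What J ks V₀ V₁ a ≤ Wbar J ks V₀ V₁ a := by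
  obtain ⟨⟨hloc₀, hcov₀, -⟩, horth₀⟩ := h₀
  obtain ⟨⟨hloc₁, hcov₁, -⟩, horth₁⟩ := h₁
  subst hV₀ hV₁
  intro a ha
  have := finiteDimensional_Vbar hJ hks horth₀ hloc₀ ha
  have := finiteDimensional_Vbar hJ hks horth₁ hloc₁ ha
  have hrank := finrank_oneSubProjSub_add_finrank_inf (U := Vbar J ks (SClos J Φ₁) a)
    (Vbar J ks (SClos J Φ₀) a).closed_of_finiteDimensional
  exact ⟨by unfold What Ysp; omega, What_le_Wbar horth₀ hcov₀ horth₁ hcov₁ ha hle⟩
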